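/- arXiv:1901.01785 — 6 statements merged into one kernel-verified Lean document; each statement's English description precedes it below -/
import Mathlib

section
/- For every real number x with 0 < |x| < 1/2, the series ∑_{ℓ=0}^∞ (1/(2ℓ+1)) C(2ℓ,ℓ) x^{2ℓ} converges to (1/(2x)) · arctan(2x/√(1-4x²)). -/
/-!
The generating function `∑ C(2n,n) uⁿ = (1 - 4u)^(-1/2)` is the binomial series of exponent
`-1/2`, because `4ⁿ · binom(n - 1/2, n) = C(2n,n)`. Substituting `u = t²` and integrating
termwise, `∑ C(2n,n)/(2n+1) t^(2n+1)` and `arcsin(2t)/2` both vanish at `0` and have derivative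
`1/√(1 - 4t²)` on `|t| < 1/2`, so they agree there. Dividing by `t` and using
`arcsin y = arctan (y / √(1 - y²))` gives the theorem.
-/

open Polynomial Real

theorem four_pow_mul_ascPochhammer_eval_half {K : Type*} [Field K] [CharZero K] (n : ℕ) :
    4 ^ n * (ascPochhammer K n).eval (1 / 2 : K) = n.factorial * n.centralBinom := by
  induction n with
  | zero => simp
  | succ n ih =>
    have h : ((n + 1 : ℕ) : K) * (n + 1).centralBinom = 2 * (2 * n + 1) * n.centralBinom := by
      exact_mod_cast Nat.succ_mul_centralBinom_succ n
    rw [ascPochhammer_succ_eval, Nat.factorial_succ]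
    push_cast at h ⊢
    linear_combination (4 * (1 / 2 + (n : K))) * ih - (n.factorial : K) * h

theorem Ring.choose_half_add_sub_one_mul_four_pow {K : Type*} [Field K] [CharZero K] (n : ℕ) :
    Ring.choose (1 / 2 + n - 1 : K) n * 4 ^ n = n.centralBinom := by
  have hfac : (n.factorial : K) ≠ 0 := by exact_mod_cast n.factorial_ne_zero
  have h := Ring.factorial_nsmul_multichoose_eq_ascPochhammer (1 / 2 : K) n
  rw [Ring.multichoose_eq, nsmul_eq_mul, ascPochhammer_smeval_eq_eval] at h
  apply mul_left_cancel₀ hfac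
  rw [← four_pow_mul_ascPochhammer_eval_half, ← h]
  ring

theorem hasSum_centralBinom_mul_pow {u : ℝ} (hu : |u| < 1 / 4) :
    HasSum (fun n ↦ (n.centralBinom : ℝ) * u ^ n) (1 / √(1 - 4 * u)) := by
  have h4u : 4 * u ∈ Metric.eball (0 : ℝ) 1 := by
    rw [← ENNReal.coe_one, Metric.eball_coe, NNReal.coe_one, mem_ball_zero_iff, norm_mul,
      Real.norm_eq_abs, Real.norm_eq_abs]
    norm_num
    linarith
  have h := (Real.one_div_one_sub_rpow_hasFPowerSeriesOnBall_zero (1 / 2)).hasSum h4u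
  have hcoef (n : ℕ) :
      Ring.choose (1 / 2 + n - 1 : ℝ) n * (4 * u) ^ n = n.centralBinom * u ^ n := by
    rw [mul_pow, ← mul_assoc, Ring.choose_half_add_sub_one_mul_four_pow]
  simpa only [FormalMultilinearSeries.ofScalars_apply_eq, zero_add, smul_eq_mul, hcoef,
    ← Real.sqrt_eq_rpow] using h

theorem hasSum_centralBinom_mul_pow_two_mul {t : ℝ} (ht : |t| < 1 / 2) :
    HasSum (fun n ↦ (n.centralBinom : ℝ) * t ^ (2 * n)) (1 / √(1 - 4 * t ^ 2)) := by
  have ht2 : |t ^ 2| < 1 / 4 := by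
    rw [abs_pow, show (1 / 4 : ℝ) = (1 / 2) ^ 2 by norm_num]
    exact pow_lt_pow_left₀ ht (abs_nonneg t) two_ne_zero
  simpa only [pow_mul] using hasSum_centralBinom_mul_pow ht2

theorem norm_centralBinom_mul_pow_two_mul_le {r y : ℝ} (hy : |y| ≤ r) (n : ℕ) :
    ‖(n.centralBinom : ℝ) * y ^ (2 * n)‖ ≤ (4 * r ^ 2) ^ n := by
  rw [norm_mul, norm_pow, Real.norm_natCast, Real.norm_eq_abs, mul_pow, pow_mul]
  gcongr
  exact_mod_cast Nat.centralBinom_le_four_pow n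

theorem hasDerivAt_centralBinom_div_mul_pow (n : ℕ) (y : ℝ) :
    HasDerivAt (fun z ↦ (n.centralBinom : ℝ) / (2 * n + 1) * z ^ (2 * n + 1))
      (n.centralBinom * y ^ (2 * n)) y := by
  refine ((hasDerivAt_pow (2 * n + 1) y).const_mul _).congr_deriv ?_
  rw [Nat.add_sub_cancel]
  push_cast
  field_simp

theorem hasDerivAt_arcsin_two_mul_div_two {y : ℝ} (hy : |y| < 1 / 2) :
    HasDerivAt (fun z ↦ arcsin (2 * z) / 2) (1 / √(1 - 4 * y ^ 2)) y := by
  obtain ⟨hy₁, hy₂⟩ := abs_lt.mp hy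
  have hmul : HasDerivAt (fun z : ℝ ↦ 2 * z) 2 y := by
    simpa using (hasDerivAt_id y).const_mul (2 : ℝ)
  have h := ((hasDerivAt_arcsin (by linarith) (by linarith)).comp y hmul).div_const 2
  refine h.congr_deriv ?_
  rw [mul_pow]
  norm_num

theorem hasSum_centralBinom_div_mul_pow {t : ℝ} (ht : |t| < 1 / 2) :
    HasSum (fun n : ℕ ↦ (n.centralBinom : ℝ) / (2 * n + 1) * t ^ (2 * n + 1))
      (arcsin (2 * t) / 2) := by
  -- Termwise differentiation needs a summable bound on the derivatives, which only holds on a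
  -- ball of radius `r < 1/2`.
  obtain ⟨r, htr, hr⟩ := exists_between ht
  set s := Metric.ball (0 : ℝ) r
  have mem_s {y : ℝ} : y ∈ s ↔ |y| < r := by rw [mem_ball_zero_iff, Real.norm_eq_abs]
  have hts : t ∈ s := mem_s.mpr htr
  have h0s : 0 ∈ s := Metric.mem_ball_self ((abs_nonneg t).trans_lt htr)
  have hs : IsPreconnected s := (convex_ball 0 r).isPreconnected
  have hgeom : Summable fun n : ℕ ↦ (4 * r ^ 2) ^ n :=
    summable_geometric_of_lt_one (by positivity) (by nlinarith [abs_nonneg t])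
  have hbound (n : ℕ) (y : ℝ) (hy : y ∈ s) :=
    norm_centralBinom_mul_pow_two_mul_le (mem_s.mp hy).le n
  have hsum0 : Summable fun n : ℕ ↦ (n.centralBinom : ℝ) / (2 * n + 1) * 0 ^ (2 * n + 1) := by simp
  have hderiv {y : ℝ} (hy : y ∈ s) : HasDerivAt
      (fun z ↦ ∑' n : ℕ, (n.centralBinom : ℝ) / (2 * n + 1) * z ^ (2 * n + 1))
      (1 / √(1 - 4 * y ^ 2)) y := by
    rw [← (hasSum_centralBinom_mul_pow_two_mul ((mem_s.mp hy).trans hr)).tsum_eq]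
    exact hasDerivAt_tsum_of_isPreconnected hgeom Metric.isOpen_ball hs
      (fun n y _ ↦ hasDerivAt_centralBinom_div_mul_pow n y) hbound h0s hsum0 hy
  have harcsin {y : ℝ} (hy : y ∈ s) :=
    hasDerivAt_arcsin_two_mul_div_two ((mem_s.mp hy).trans hr)
  have heq : s.EqOn (fun z ↦ ∑' n : ℕ, (n.centralBinom : ℝ) / (2 * n + 1) * z ^ (2 * n + 1))
      (fun z ↦ arcsin (2 * z) / 2) := by
    refine Metric.isOpen_ball.eqOn_of_deriv_eq hs
      (fun y hy ↦ (hderiv hy).differentiableAt.differentiableWithinAt)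
      (fun y hy ↦ (harcsin hy).differentiableAt.differentiableWithinAt)
      (fun y hy ↦ ?_) h0s (by simp)
    rw [(hderiv hy).deriv, (harcsin hy).deriv]
  rw [show arcsin (2 * t) / 2 = _ from (heq hts).symm]
  exact (summable_of_summable_hasDerivAt_of_isPreconnected hgeom Metric.isOpen_ball hs
    (fun n y _ ↦ hasDerivAt_centralBinom_div_mul_pow n y) hbound h0s hsum0 hts).hasSum

/-- For every real `x` with `0 < |x| < 1/2`, the series
`∑ (1/(2ℓ+1)) C(2ℓ,ℓ) x^(2ℓ)` converges to `(1/(2x)) · arctan(2x/√(1-4x²))`. -/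
theorem central_binomial_arctan_series (x : ℝ) (hx0 : 0 < |x|) (hx : |x| < 1/2) :
    HasSum (fun ℓ : ℕ => (1 / (2 * (ℓ : ℝ) + 1)) * ((2 * ℓ).choose ℓ : ℝ) * x ^ (2 * ℓ))
      ((1 / (2 * x)) * Real.arctan (2 * x / Real.sqrt (1 - 4 * x ^ 2))) := by
  have hx_ne : x ≠ 0 := abs_pos.mp hx0
  have h2x : 2 * x ∈ Set.Ioo (-1 : ℝ) 1 := by
    rw [Set.mem_Ioo, ← abs_lt, abs_mul, abs_two]
    linarith
  have hterm (ℓ : ℕ) : 1 / (2 * (ℓ : ℝ) + 1) * ((2 * ℓ).choose ℓ : ℝ) * x ^ (2 * ℓ) =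
      x⁻¹ * ((ℓ.centralBinom : ℝ) / (2 * ℓ + 1) * x ^ (2 * ℓ + 1)) := by
    rw [Nat.centralBinom_eq_two_mul_choose, pow_succ]
    field_simp
  have hsum : 1 / (2 * x) * arctan (2 * x / √(1 - 4 * x ^ 2)) = x⁻¹ * (arcsin (2 * x) / 2) := by
    rw [arcsin_eq_arctan h2x, mul_pow]
    field_simp
    ring_nf
  simpa only [hterm, hsum] using (hasSum_centralBinom_div_mul_pow hx).mul_left x⁻¹
end

section
/- For every natural number g, ∑_{ℓ=0}^{g} [C(2ℓ,ℓ)/(2ℓ+1)] · [C(2(g-ℓ),g-ℓ)/(2(g-ℓ)+1)] = 2 · 16^g / ((g+1)² · C(2g+2,g+1)). -/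
/-!
Write `t n = C(2n,n)/(2n+1)` and `S g = ∑_{a+b=g} t a · t b`. Zeilberger's algorithm finds the
first-order recurrence `(g+2)(2g+3) S(g+1) = 8(g+1)² S g` together with a rational certificate
that turns it into a telescoping sum over the antidiagonal. The right-hand side satisfies the same
recurrence because `(n+1) C(2n+2,n+1) = 2(2n+1) C(2n,n)`, and both sides equal `1` at `g = 0`.
-/

open Finset Nat

theorem Finset.Nat.sum_antidiagonal_telescope {M : Type*} [AddCommGroup M] (f : ℕ × ℕ → M)
    (n : ℕ) :
    ∑ p ∈ antidiagonal n, (f (p.1 + 1, p.2) - f (p.1, p.2 + 1)) =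
      f (n + 1, 0) - f (0, n + 1) := by
  rw [sum_sub_distrib, sub_eq_sub_iff_add_eq_add, add_comm]
  exact sum_antidiagonal_succ.symm.trans sum_antidiagonal_succ'

theorem Nat.cast_centralBinom_succ (n : ℕ) :
    (centralBinom (n + 1) : ℚ) = 2 * (2 * n + 1) * centralBinom n / (n + 1) := by
  rw [eq_div_iff (by positivity), mul_comm]
  exact_mod_cast succ_mul_centralBinom_succ n

noncomputable def centralBinomDivOdd (n : ℕ) : ℚ := centralBinom n / (2 * n + 1)

noncomputable def centralBinomDivOddConv (g : ℕ) : ℚ :=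
  ∑ p ∈ antidiagonal g, centralBinomDivOdd p.1 * centralBinomDivOdd p.2

noncomputable def zeilbergerCert (p : ℕ × ℕ) : ℚ :=
  -(p.1 * (p.1 + 3 * p.2 + 1)) / ((p.1 + p.2) * (2 * p.2 + 1)) *
    centralBinom p.1 * centralBinom p.2

theorem zeilbergerCert_zero_left (m : ℕ) : zeilbergerCert (0, m) = 0 := by
  simp [zeilbergerCert]

theorem zeilbergerCert_zero_right (k : ℕ) :
    zeilbergerCert (k + 1, 0) = -(k + 2) * centralBinom (k + 1) := by
  have : ((k : ℚ) + 1) ≠ 0 := by positivity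
  simp only [zeilbergerCert, centralBinom_zero]
  push_cast
  field_simp
  ring

theorem centralBinomDivOdd_mul_recurrence (a b : ℕ) :
    ((a + b : ℚ) + 2) * (2 * (a + b) + 3) * (centralBinomDivOdd a * centralBinomDivOdd (b + 1)) =
      8 * ((a + b : ℚ) + 1) ^ 2 * (centralBinomDivOdd a * centralBinomDivOdd b) +
        (zeilbergerCert (a + 1, b) - zeilbergerCert (a, b + 1)) := by
  simp only [centralBinomDivOdd, zeilbergerCert, cast_centralBinom_succ]
  push_cast
  field_simp
  ring

theorem centralBinomDivOddConv_succ (g : ℕ) :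
    ((g : ℚ) + 2) * (2 * g + 3) * centralBinomDivOddConv (g + 1) =
      8 * ((g : ℚ) + 1) ^ 2 * centralBinomDivOddConv g := by
  have hsummand : ∀ p ∈ antidiagonal g,
      ((g : ℚ) + 2) * (2 * g + 3) * (centralBinomDivOdd p.1 * centralBinomDivOdd (p.2 + 1)) =
        8 * ((g : ℚ) + 1) ^ 2 * (centralBinomDivOdd p.1 * centralBinomDivOdd p.2) +
          (zeilbergerCert (p.1 + 1, p.2) - zeilbergerCert (p.1, p.2 + 1)) := by
    intro p hp
    rw [← mem_antidiagonal.mp hp]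
    exact_mod_cast centralBinomDivOdd_mul_recurrence p.1 p.2
  have hlast : centralBinomDivOdd (g + 1) * centralBinomDivOdd 0 =
      centralBinom (g + 1) / (2 * g + 3) := by
    simp only [centralBinomDivOdd, centralBinom_zero]
    push_cast
    ring
  rw [centralBinomDivOddConv, sum_antidiagonal_succ', mul_add, mul_sum, sum_congr rfl hsummand,
    sum_add_distrib, Finset.Nat.sum_antidiagonal_telescope, zeilbergerCert_zero_left,
    zeilbergerCert_zero_right, ← mul_sum, hlast, centralBinomDivOddConv]
  have : (2 * (g : ℚ) + 3) ≠ 0 := by positivity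
  field_simp
  ring

theorem centralBinomDivOddConv_eq (g : ℕ) :
    centralBinomDivOddConv g = 2 * 16 ^ g / (((g : ℚ) + 1) ^ 2 * centralBinom (g + 1)) := by
  induction g with
  | zero => simp [centralBinomDivOddConv, centralBinomDivOdd, centralBinom, Nat.choose]
  | succ g ih =>
    have hrec : centralBinomDivOddConv (g + 1) =
        8 * ((g : ℚ) + 1) ^ 2 * centralBinomDivOddConv g / (((g : ℚ) + 2) * (2 * g + 3)) := by
      rw [eq_div_iff (by positivity), mul_comm]
      exact centralBinomDivOddConv_succ g
    have : (centralBinom (g + 1) : ℚ) ≠ 0 := by exact_mod_cast centralBinom_ne_zero (g + 1)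
    rw [hrec, ih, cast_centralBinom_succ (g + 1)]
    push_cast
    field_simp
    ring

/-- For every natural number `g`,
`∑_{ℓ=0}^{g} [C(2ℓ,ℓ)/(2ℓ+1)]·[C(2(g-ℓ),g-ℓ)/(2(g-ℓ)+1)] = 2·16^g/((g+1)²·C(2g+2,g+1))`. -/
theorem catalan_type_convolution (g : ℕ) :
    ∑ ℓ ∈ Finset.range (g + 1),
        (((2 * ℓ).choose ℓ : ℚ) / (2 * (ℓ : ℚ) + 1)) *
          (((2 * (g - ℓ)).choose (g - ℓ) : ℚ) / (2 * ((g : ℚ) - (ℓ : ℚ)) + 1))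
      = 2 * 16 ^ g / (((g : ℚ) + 1) ^ 2 * ((2 * g + 2).choose (g + 1) : ℚ)) := by
  rw [show 2 * g + 2 = 2 * (g + 1) by ring, ← centralBinom_eq_two_mul_choose,
    ← centralBinomDivOddConv_eq, centralBinomDivOddConv, sum_antidiagonal_eq_sum_range_succ_mk]
  refine sum_congr rfl fun ℓ hℓ => ?_
  have hle : ℓ ≤ g := Nat.lt_succ_iff.mp (mem_range.mp hℓ)
  simp only [centralBinomDivOdd, centralBinom_eq_two_mul_choose, Nat.cast_sub hle]
end

section
/- Let R be a commutative ℚ-algebra and D : R → R a ℚ-linear map satisfying D(x³) - 3x·D(x²) + 3x²·D(x) = 0 for all x ∈ R. Then for every x ∈ R and every natural number n ≥ 2, D(xⁿ) = C(n,2)·D(x²)·x^{n-2} - n(n-2)·D(x)·x^{n-1}. -/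
/-!
Polarizing the cubic identity (evaluating it at `x + y`, `x - y` and `y`) gives
`D(x²y) = 2x·D(xy) + y·D(x²) - x²·D(y) - 2xy·D(x)`. Taking `y = xᵐ` turns this into a
second-order linear recurrence for `D(xⁿ)`, which the closed form satisfies because the second
difference of `C(n,2)` is `1`.
-/

section CubicIdentity

variable {R F : Type*} [CommRing R] [FunLike F R R] [AddMonoidHomClass F R R] [Algebra ℚ R]

theorem map_sq_mul_of_cubic (D : F)
    (hD : ∀ x : R, D (x ^ 3) - 3 * x * D (x ^ 2) + 3 * x ^ 2 * D x = 0) (x y : R) :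
    D (x ^ 2 * y) = 2 * x * D (x * y) + y * D (x ^ 2) - x ^ 2 * D y - 2 * (x * y) * D x := by
  have h6 : IsUnit (6 : R) := by
    simpa only [map_ofNat] using (IsUnit.mk0 (6 : ℚ) (by norm_num)).map (algebraMap ℚ R)
  have hsum : (x + y) ^ 3 = x ^ 3 + 3 • (x ^ 2 * y) + 3 • (x * y ^ 2) + y ^ 3 := by
    simp only [nsmul_eq_mul]; ring
  have hdiff : (x - y) ^ 3 = x ^ 3 - 3 • (x ^ 2 * y) + 3 • (x * y ^ 2) - y ^ 3 := by
    simp only [nsmul_eq_mul]; ring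
  have hsum_sq : (x + y) ^ 2 = x ^ 2 + 2 • (x * y) + y ^ 2 := by
    simp only [nsmul_eq_mul]; ring
  have hdiff_sq : (x - y) ^ 2 = x ^ 2 - 2 • (x * y) + y ^ 2 := by
    simp only [nsmul_eq_mul]; ring
  have h_add := hD (x + y)
  have h_sub := hD (x - y)
  rw [hsum, hsum_sq] at h_add
  rw [hdiff, hdiff_sq] at h_sub
  simp only [map_add, map_sub, map_nsmul] at h_add h_sub
  simp only [nsmul_eq_mul, Nat.cast_ofNat] at h_add h_sub
  refine h6.mul_left_cancel ?_
  linear_combination h_add - h_sub - 2 * hD y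

theorem map_pow_add_two_of_cubic (D : F)
    (hD : ∀ x : R, D (x ^ 3) - 3 * x * D (x ^ 2) + 3 * x ^ 2 * D x = 0) (x : R) (m : ℕ) :
    D (x ^ (m + 2)) = ((m + 2).choose 2 : R) * D (x ^ 2) * x ^ m
      - ((m + 2 : R) * m) * D x * x ^ (m + 1) := by
  induction m using Nat.twoStepInduction with
  | zero => simp
  | one => norm_num; linear_combination hD x
  | more m ih ih_succ =>
    have hrec := map_sq_mul_of_cubic D hD x (x ^ (m + 2))
    rw [← pow_add, ← pow_succ', Nat.add_comm 2] at hrec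
    have hchoose (k : ℕ) : ((k + 1).choose 2 : R) = k + (k.choose 2 : R) := by
      rw [Nat.choose_succ_succ', Nat.choose_one_right, Nat.cast_add]
    have h4 : ((m + 2 + 2).choose 2 : R) = (m + 3 : ℕ) + ((m + 1 + 2).choose 2 : R) :=
      hchoose (m + 3)
    have h3 : ((m + 1 + 2).choose 2 : R) = (m + 2 : ℕ) + ((m + 2).choose 2 : R) :=
      hchoose (m + 2)
    push_cast at ih_succ h4 h3 ⊢
    linear_combination hrec + 2 * x * ih_succ - x ^ 2 * ih - D (x ^ 2) * x ^ (m + 2) * (h4 - h3)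

end CubicIdentity

/-- If `D : R → R` is a ℚ-linear map on a commutative ℚ-algebra satisfying
`D(x³) - 3x·D(x²) + 3x²·D(x) = 0` for all `x`, then for all `x` and `n ≥ 2`,
`D(xⁿ) = C(n,2)·D(x²)·x^(n-2) - n(n-2)·D(x)·x^(n-1)`. -/
theorem second_order_power_rule {R : Type*} [CommRing R] [Algebra ℚ R]
    (D : R →ₗ[ℚ] R)
    (hD : ∀ x : R, D (x ^ 3) - 3 * x * D (x ^ 2) + 3 * x ^ 2 * D x = 0) :
    ∀ (x : R) (n : ℕ), 2 ≤ n →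
      D (x ^ n) = (n.choose 2 : R) * D (x ^ 2) * x ^ (n - 2)
        - ((n : R) * ((n : R) - 2)) * D x * x ^ (n - 1) := by
  intro x n hn
  obtain ⟨m, rfl⟩ := Nat.exists_eq_add_of_le' hn
  rw [Nat.add_sub_cancel, Nat.add_sub_assoc one_le_two, map_pow_add_two_of_cubic D hD x m]
  push_cast
  ring
end

section
/- Let R be a commutative ℚ-algebra and D : R → R a ℚ-linear map such that D(xyz) = x·D(yz) + y·D(xz) + z·D(xy) - xy·D(z) - xz·D(y) - yz·D(x) for all x,y,z ∈ R. Define the symmetric bilinear map D₂(x,y) = D(xy) - x·D(y) - y·D(x). Then for all n ≥ 1 and all x₁,…,xₙ ∈ R: D(x₁⋯xₙ) = ∑_{i=1}^n D(x_i)·∏_{j≠i} x_j + ∑_{1≤i<j≤n} D₂(x_i,x_j)·∏_{k≠i,j} x_k. -/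
/-!
Writing `D₂ x y = D (x * y) - x * D y - y * D x`, the triple-product rule says exactly that
`D₂ (x * y) z = x * D₂ y z + y * D₂ x z`, i.e. that `D₂ · z` is a derivation. Peeling off the
largest factor `xₐ` of a product `P * xₐ` gives `D (P * xₐ) = xₐ * D P + P * D xₐ + D₂ P xₐ`;
the first term is handled by induction and the last by the product rule for the derivation
`D₂ · xₐ`, which produces exactly the new pairs `(i, a)`.
-/

open Finset

section LeibnizDefect

variable {R : Type*} [CommRing R]

def leibnizDefect (D : R → R) (x y : R) : R := D (x * y) - x * D y - y * D x

theorem map_mul_eq_add_leibnizDefect (D : R → R) (x y : R) :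
    D (x * y) = x * D y + y * D x + leibnizDefect D x y := by
  unfold leibnizDefect; ring

theorem leibnizDefect_mul_left_of_triple {D : R → R}
    (hD : ∀ x y z : R,
      D (x * y * z) = x * D (y * z) + y * D (x * z) + z * D (x * y)
        - x * y * D z - x * z * D y - y * z * D x) (x y z : R) :
    leibnizDefect D (x * y) z = x * leibnizDefect D y z + y * leibnizDefect D x z := by
  unfold leibnizDefect; linear_combination hD x y z

end LeibnizDefect

theorem Finset.prod_erase_insert_of_ne {ι M : Type*} [CommMonoid M] [DecidableEq ι]
    {s : Finset ι} {a i : ι} (ha : a ∉ s) (hai : a ≠ i) (f : ι → M) :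
    ∏ k ∈ (insert a s).erase i, f k = f a * ∏ k ∈ s.erase i, f k := by
  rw [erase_insert_of_ne hai, prod_insert fun h => ha (mem_of_mem_erase h)]

theorem Finset.sum_mul_prod_erase_insert {ι R : Type*} [CommSemiring R] [DecidableEq ι]
    {s : Finset ι} {a : ι} (ha : a ∉ s) (g f : ι → R) :
    ∑ i ∈ s, g i * ∏ j ∈ (insert a s).erase i, f j
      = f a * ∑ i ∈ s, g i * ∏ j ∈ s.erase i, f j := by
  rw [mul_sum]
  refine sum_congr rfl fun i hi => ?_
  rw [prod_erase_insert_of_ne ha (ne_of_mem_of_not_mem hi ha).symm]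
  ring

theorem Finset.sum_filter_lt_insert_of_forall_lt {ι M : Type*} [LinearOrder ι]
    [AddCommMonoid M] {s : Finset ι} {a : ι} (hs : ∀ i ∈ s, i < a) (f : ι → ι → M) :
    ∑ p ∈ (insert a s ×ˢ insert a s).filter (fun p => p.1 < p.2), f p.1 p.2
      = ∑ p ∈ (s ×ˢ s).filter (fun p => p.1 < p.2), f p.1 p.2 + ∑ i ∈ s, f i a := by
  have ha : a ∉ s := fun h => lt_irrefl a (hs a h)
  have not_lt_a : ∀ j ∈ insert a s, ¬ a < j := fun j hj => by
    rcases mem_insert.1 hj with rfl | hj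
    exacts [lt_irrefl j, (hs j hj).asymm]
  rw [sum_filter, sum_filter, sum_product, sum_product, sum_insert ha,
    sum_eq_zero fun j hj => if_neg (not_lt_a j hj), zero_add, add_comm, ← sum_add_distrib]
  refine sum_congr rfl fun i hi => ?_
  rw [sum_insert ha, if_pos (hs i hi), add_comm]

theorem map_prod_of_leibniz {ι R : Type*} [CommRing R] [DecidableEq ι] {δ : R → R}
    (hδ : ∀ a b, δ (a * b) = a * δ b + b * δ a) (s : Finset ι) (f : ι → R) :
    δ (∏ i ∈ s, f i) = ∑ i ∈ s, δ (f i) * ∏ j ∈ s.erase i, f j := by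
  induction s using Finset.induction_on with
  | empty =>
    simpa using hδ 1 1
  | insert a s ha ih =>
    rw [prod_insert ha, sum_insert ha, erase_insert ha, sum_mul_prod_erase_insert ha, hδ, ih]
    ring

theorem map_prod_eq_of_leibnizDefect_mul_left {ι R : Type*} [LinearOrder ι] [CommRing R]
    {D : R → R}
    (hD : ∀ x y z : R,
      leibnizDefect D (x * y) z = x * leibnizDefect D y z + y * leibnizDefect D x z)
    (s : Finset ι) (x : ι → R) :
    D (∏ i ∈ s, x i) =
      (∑ i ∈ s, D (x i) * ∏ j ∈ s.erase i, x j) +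
      ∑ p ∈ (s ×ˢ s).filter (fun p => p.1 < p.2),
        leibnizDefect D (x p.1) (x p.2) * ∏ k ∈ (s.erase p.1).erase p.2, x k := by
  induction s using Finset.induction_on_max with
  | empty =>
    have h := hD 1 1 1
    simp only [leibnizDefect, mul_one, one_mul] at h
    simp only [prod_empty, sum_empty, empty_product, filter_empty, add_zero]
    linear_combination h
  | insert a s hs ih =>
    have ha : a ∉ s := fun h => lt_irrefl a (hs a h)
    have hpairs : ∑ p ∈ (s ×ˢ s).filter (fun p => p.1 < p.2),
          leibnizDefect D (x p.1) (x p.2) * ∏ k ∈ ((insert a s).erase p.1).erase p.2, x k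
        = x a * ∑ p ∈ (s ×ˢ s).filter (fun p => p.1 < p.2),
          leibnizDefect D (x p.1) (x p.2) * ∏ k ∈ (s.erase p.1).erase p.2, x k := by
      rw [mul_sum]
      refine sum_congr rfl fun p hp => ?_
      obtain ⟨hp₁, hp₂⟩ := mem_product.1 (mem_filter.1 hp).1
      rw [erase_insert_of_ne (hs _ hp₁).ne',
        prod_erase_insert_of_ne (fun h => ha (mem_of_mem_erase h)) (hs _ hp₂).ne']
      ring
    have hnew : ∑ i ∈ s, leibnizDefect D (x i) (x a) * ∏ k ∈ ((insert a s).erase i).erase a, x k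
        = leibnizDefect D (∏ i ∈ s, x i) (x a) := by
      rw [map_prod_of_leibniz (δ := fun y => leibnizDefect D y (x a)) (fun y z => hD y z _)]
      refine sum_congr rfl fun i hi => ?_
      rw [erase_insert_of_ne (hs i hi).ne', erase_insert fun h => ha (mem_of_mem_erase h)]
    rw [prod_insert ha, sum_insert ha, erase_insert ha, sum_mul_prod_erase_insert ha,
      sum_filter_lt_insert_of_forall_lt hs
        (fun i j => leibnizDefect D (x i) (x j) * ∏ k ∈ ((insert a s).erase i).erase j, x k),
      hpairs, hnew, mul_comm, map_mul_eq_add_leibnizDefect D, ih]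
    ring

/-- If a ℚ-linear map `D` on a commutative ℚ-algebra satisfies the triple-product rule
`D(xyz) = x·D(yz) + y·D(xz) + z·D(xy) - xy·D(z) - xz·D(y) - yz·D(x)`, then with
`D₂(x,y) = D(xy) - x·D(y) - y·D(x)` one has, for all `n ≥ 1` and `x₁,…,xₙ`:
`D(x₁⋯xₙ) = ∑ᵢ D(xᵢ)·∏_{j≠i} xⱼ + ∑_{i<j} D₂(xᵢ,xⱼ)·∏_{k≠i,j} xₖ`. -/
theorem second_order_product_expansion {R : Type*} [CommRing R] [Algebra ℚ R]
    (D : R →ₗ[ℚ] R)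
    (hD : ∀ x y z : R,
      D (x * y * z) = x * D (y * z) + y * D (x * z) + z * D (x * y)
        - x * y * D z - x * z * D y - y * z * D x) :
    ∀ (n : ℕ), 1 ≤ n → ∀ x : Fin n → R,
      D (∏ i, x i) =
        (∑ i, D (x i) * ∏ j ∈ Finset.univ.erase i, x j) +
        ∑ p ∈ Finset.univ.filter (fun p : Fin n × Fin n => p.1 < p.2),
          (D (x p.1 * x p.2) - x p.1 * D (x p.2) - x p.2 * D (x p.1)) *
            ∏ k ∈ (Finset.univ.erase p.1).erase p.2, x k := by
  intro n _ x
  have h := map_prod_eq_of_leibnizDefect_mul_left (leibnizDefect_mul_left_of_triple hD) univ x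
  rwa [univ_product_univ] at h
end

section
/- Let R be a commutative ℚ-algebra, D : R → R a ℚ-linear map, and D₂(x,y) = D(xy) - x·D(y) - y·D(x). Then D satisfies D(x³) - 3x·D(x²) + 3x²·D(x) = 0 for all x ∈ R if and only if for every fixed x ∈ R the map y ↦ D₂(x,y) is a derivation of R (i.e., D₂(x,yz) = y·D₂(x,z) + z·D₂(x,y) for all y,z). -/
/-- For a ℚ-linear map `D` on a commutative ℚ-algebra with polarization
`D₂(x,y) = D(xy) - x·D(y) - y·D(x)`: `D` satisfies the cubic relation
`D(x³) - 3x·D(x²) + 3x²·D(x) = 0` for all `x` if and only if for every fixed `x`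
the map `y ↦ D₂(x,y)` is a derivation, i.e. `D₂(x,yz) = y·D₂(x,z) + z·D₂(x,y)`. -/
theorem cubic_relation_iff_polarization_derivation {R : Type*} [CommRing R] [Algebra ℚ R]
    (D : R →ₗ[ℚ] R) :
    (∀ x : R, D (x ^ 3) - 3 * x * D (x ^ 2) + 3 * x ^ 2 * D x = 0) ↔
      (∀ x y z : R,
        D (x * (y * z)) - x * D (y * z) - (y * z) * D x =
          y * (D (x * z) - x * D z - z * D x) + z * (D (x * y) - x * D y - y * D x)) := by
  constructor
  · intro H x y z
    have e1 := H (x + y + z)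
    have e2 := H (x + y)
    have e3 := H (x + z)
    have e4 := H (y + z)
    have e5 := H x
    have e6 := H y
    have e7 := H z
    rw [show (x + y + z) ^ 3 = x ^ 3 + y ^ 3 + z ^ 3 + (x ^ 2 * y + x ^ 2 * y + x ^ 2 * y)
        + (x ^ 2 * z + x ^ 2 * z + x ^ 2 * z) + (x * y ^ 2 + x * y ^ 2 + x * y ^ 2)
        + (x * z ^ 2 + x * z ^ 2 + x * z ^ 2) + (y ^ 2 * z + y ^ 2 * z + y ^ 2 * z)
        + (y * z ^ 2 + y * z ^ 2 + y * z ^ 2)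
        + (x * (y * z) + x * (y * z) + x * (y * z) + x * (y * z) + x * (y * z) + x * (y * z))
        from by ring,
      show (x + y + z) ^ 2 = x ^ 2 + y ^ 2 + z ^ 2 + (x * y + x * y) + (x * z + x * z)
        + (y * z + y * z) from by ring] at e1
    rw [show (x + y) ^ 3 = x ^ 3 + y ^ 3 + (x ^ 2 * y + x ^ 2 * y + x ^ 2 * y)
        + (x * y ^ 2 + x * y ^ 2 + x * y ^ 2) from by ring,
      show (x + y) ^ 2 = x ^ 2 + y ^ 2 + (x * y + x * y) from by ring] at e2
    rw [show (x + z) ^ 3 = x ^ 3 + z ^ 3 + (x ^ 2 * z + x ^ 2 * z + x ^ 2 * z)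
        + (x * z ^ 2 + x * z ^ 2 + x * z ^ 2) from by ring,
      show (x + z) ^ 2 = x ^ 2 + z ^ 2 + (x * z + x * z) from by ring] at e3
    rw [show (y + z) ^ 3 = y ^ 3 + z ^ 3 + (y ^ 2 * z + y ^ 2 * z + y ^ 2 * z)
        + (y * z ^ 2 + y * z ^ 2 + y * z ^ 2) from by ring,
      show (y + z) ^ 2 = y ^ 2 + z ^ 2 + (y * z + y * z) from by ring] at e4
    simp only [map_add] at e1 e2 e3 e4
    have h6 : (6 : R) * ((D (x * (y * z)) - x * D (y * z) - (y * z) * D x)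
        - (y * (D (x * z) - x * D z - z * D x) + z * (D (x * y) - x * D y - y * D x))) = 0 := by
      linear_combination e1 - e2 - e3 - e4 + e5 + e6 + e7
    have h6' : ((6 : ℚ)⁻¹) • ((6 : R) * ((D (x * (y * z)) - x * D (y * z) - (y * z) * D x)
        - (y * (D (x * z) - x * D z - z * D x) + z * (D (x * y) - x * D y - y * D x)))) = 0 := by
      rw [h6, smul_zero]
    rw [show (6 : R) = (6 : ℚ) • (1 : R) from by
        rw [Algebra.smul_def, map_ofNat, mul_one], smul_mul_assoc, one_mul,
      smul_smul] at h6'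
    norm_num at h6'
    linear_combination h6'
  · intro H x
    have h := H x x x
    rw [show (x : R) ^ 3 = x * (x * x) from by ring, show (x : R) ^ 2 = x * x from by ring]
    linear_combination h
end

section
/- Let A be a finite set and (z_a)_{a∈A} a family of elements in a commutative ring. Write z_S = ∑_{a∈S} z_a for S ⊆ A. Then for every natural number n with n ≥ |A|, one has z_A^{n+1} = ∑_{∅≠J⊆A} |J|! · z_J · (∏_{ν∈J} z_ν) · z_A^{n-|J|}, where the sum is over all nonempty subsets J of A. -/
/-!
Let `e_m = ∑_{|J| = m} ∏_{a ∈ J} z_a`. Multiplying `∏_J z` by `z_A = z_J + ∑_{b ∉ J} z_b` and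
summing over `|J| = m` gives `e_m z_A = (m + 1) e_{m+1} + ∑_{|J| = m} z_J ∏_J z`, because every
`(m + 1)`-set `K` arises from exactly `m + 1` pairs `(J, b)` with `K = J ∪ {b}`. So
`m! e_m z_A - (m + 1)! e_{m+1}` is the `|J| = m` part of the right-hand side, and telescoping from
`0! e_0 = 1` gives `z_A^(n+1) = ∑_{|J| ≤ n} … + (n + 1)! e_{n+1}`. For `n ≥ |A|` the last term
vanishes and every `J ⊆ A` occurs; the empty set contributes `z_∅ = 0`.
-/

open Finset Nat

namespace Finset

variable {ι R M : Type*}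

theorem sum_powersetCard_sum_sdiff_insert [DecidableEq ι] [AddCommMonoid M] (A : Finset ι)
    (m : ℕ) (f : Finset ι → M) :
    ∑ J ∈ A.powersetCard m, ∑ b ∈ A \ J, f (insert b J) =
      (m + 1) • ∑ K ∈ A.powersetCard (m + 1), f K := by
  have hcount : (m + 1) • ∑ K ∈ A.powersetCard (m + 1), f K =
      ∑ K ∈ A.powersetCard (m + 1), ∑ _b ∈ K, f K := by
    rw [smul_sum]
    refine sum_congr rfl fun K hK => ?_
    rw [sum_const, (mem_powersetCard.1 hK).2]
  rw [hcount, sum_sigma', sum_sigma']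
  refine sum_nbij' (fun x => ⟨insert x.2 x.1, x.2⟩) (fun x => ⟨x.1.erase x.2, x.2⟩)
    ?_ ?_ ?_ ?_ fun _ _ => rfl
  · rintro ⟨J, b⟩ h
    simp only [mem_sigma, mem_powersetCard, mem_sdiff] at h ⊢
    exact ⟨⟨insert_subset h.2.1 h.1.1, by rw [card_insert_of_notMem h.2.2, h.1.2]⟩,
      mem_insert_self _ _⟩
  · rintro ⟨K, b⟩ h
    simp only [mem_sigma, mem_powersetCard, mem_sdiff] at h ⊢
    exact ⟨⟨(erase_subset _ _).trans h.1.1, by rw [card_erase_of_mem h.2, h.1.2]; rfl⟩,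
      h.1.1 h.2, notMem_erase _ _⟩
  · rintro ⟨J, b⟩ h
    simp only [mem_sigma, mem_sdiff] at h
    simp [erase_insert h.2.2]
  · rintro ⟨K, b⟩ h
    simp only [mem_sigma] at h
    simp [insert_erase h.2]

variable [CommRing R]

theorem prod_mul_sum_of_subset [DecidableEq ι] {J A : Finset ι} (hJ : J ⊆ A) (z : ι → R) :
    (∏ a ∈ J, z a) * ∑ a ∈ A, z a =
      (∑ a ∈ J, z a) * ∏ a ∈ J, z a + ∑ b ∈ A \ J, ∏ a ∈ insert b J, z a := by
  rw [← sum_sdiff hJ, mul_add, mul_sum, add_comm, mul_comm]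
  congr 1
  refine sum_congr rfl fun b hb => ?_
  rw [prod_insert (mem_sdiff.1 hb).2, mul_comm]

def esymm (A : Finset ι) (z : ι → R) (m : ℕ) : R :=
  ∑ J ∈ A.powersetCard m, ∏ a ∈ J, z a

theorem esymm_eq_zero_of_card_lt {A : Finset ι} {m : ℕ} (h : A.card < m) (z : ι → R) :
    A.esymm z m = 0 := by
  simp [esymm, powersetCard_eq_empty.2 h]

theorem esymm_mul_sum [DecidableEq ι] (A : Finset ι) (z : ι → R) (m : ℕ) :
    A.esymm z m * ∑ a ∈ A, z a =
      (m + 1) • A.esymm z (m + 1) + ∑ J ∈ A.powersetCard m, (∑ a ∈ J, z a) * ∏ a ∈ J, z a := by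
  rw [esymm, sum_mul, sum_congr rfl fun J hJ => prod_mul_sum_of_subset (mem_powersetCard.1 hJ).1 z,
    sum_add_distrib, sum_powersetCard_sum_sdiff_insert A m fun K => ∏ a ∈ K, z a, add_comm, esymm]

theorem factorial_mul_esymm_mul_sum [DecidableEq ι] (A : Finset ι) (z : ι → R) (m : ℕ) :
    (m ! : R) * A.esymm z m * ∑ a ∈ A, z a =
      ((m + 1)! : R) * A.esymm z (m + 1) +
        ∑ J ∈ A.powersetCard m, (m ! : R) * (∑ a ∈ J, z a) * ∏ a ∈ J, z a := by
  rw [mul_assoc, esymm_mul_sum, nsmul_eq_mul, mul_add, mul_sum, factorial_succ, cast_mul]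
  congr 1
  · push_cast
    ring
  · simp only [mul_assoc]

theorem sum_pow_succ_eq_sum_range_add_esymm [DecidableEq ι] (A : Finset ι) (z : ι → R) (n : ℕ) :
    (∑ a ∈ A, z a) ^ (n + 1) =
      ∑ k ∈ range (n + 1), ∑ J ∈ A.powersetCard k,
          (k ! : R) * (∑ a ∈ J, z a) * (∏ a ∈ J, z a) * (∑ a ∈ A, z a) ^ (n - k) +
        ((n + 1)! : R) * A.esymm z (n + 1) := by
  induction n with
  | zero => simp [esymm, powersetCard_one]
  | succ n ih =>
    rw [pow_succ, ih, add_mul, factorial_mul_esymm_mul_sum, sum_range_succ _ (n + 1), sum_mul]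
    have hshift : ∀ k ∈ range (n + 1),
        (∑ J ∈ A.powersetCard k,
          (k ! : R) * (∑ a ∈ J, z a) * (∏ a ∈ J, z a) * (∑ a ∈ A, z a) ^ (n - k)) * ∑ a ∈ A, z a =
        ∑ J ∈ A.powersetCard k,
          (k ! : R) * (∑ a ∈ J, z a) * (∏ a ∈ J, z a) * (∑ a ∈ A, z a) ^ (n + 1 - k) := by
      intro k hk
      rw [sum_mul]
      refine sum_congr rfl fun J _ => ?_
      rw [show n + 1 - k = n - k + 1 by grind, pow_succ, mul_assoc]
    rw [sum_congr rfl hshift]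
    simp only [Nat.sub_self, pow_zero, mul_one]
    ring

end Finset

theorem power_sum_subset_expansion_general {ι R : Type*} [CommRing R]
    (A : Finset ι) (z : ι → R) (n : ℕ) (hn : A.card ≤ n) :
    (∑ a ∈ A, z a) ^ (n + 1) =
      ∑ J ∈ A.powerset.filter (fun J => J.Nonempty),
        ((Nat.factorial J.card : ℕ) : R) * (∑ a ∈ J, z a) * (∏ a ∈ J, z a) * (∑ a ∈ A, z a) ^ (n - J.card) := by
  classical
  rw [sum_pow_succ_eq_sum_range_add_esymm, esymm_eq_zero_of_card_lt (Nat.lt_succ_of_le hn),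
    mul_zero, add_zero]
  have hcard : ∀ k, ∀ J ∈ A.powersetCard k,
      (k ! : R) * (∑ a ∈ J, z a) * (∏ a ∈ J, z a) * (∑ a ∈ A, z a) ^ (n - k) =
        (J.card ! : R) * (∑ a ∈ J, z a) * (∏ a ∈ J, z a) * (∑ a ∈ A, z a) ^ (n - J.card) := by
    rintro k J hJ
    rw [(mem_powersetCard.1 hJ).2]
  rw [sum_congr rfl fun k _ => sum_congr rfl (hcard k)]
  simp only [powersetCard_eq_filter]
  rw [sum_fiberwise_of_maps_to
    fun J hJ => mem_range_succ_iff.2 ((card_le_card (mem_powerset.1 hJ)).trans hn)]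
  refine (sum_filter_of_ne fun J _ hJ => nonempty_iff_ne_empty.2 ?_).symm
  rintro rfl
  simp at hJ

/-- For a family `(z_a)_{a∈A}` in a commutative ring and `n ≥ |A|`,
`z_A^(n+1) = ∑_{∅≠J⊆A} |J|! · z_J · (∏_{ν∈J} z_ν) · z_A^(n-|J|)`,
where `z_S = ∑_{a∈S} z_a`. -/
theorem power_sum_subset_expansion {ι R : Type*} [DecidableEq ι] [CommRing R]
    (A : Finset ι) (z : ι → R) (n : ℕ) (hn : A.card ≤ n) :
    (∑ a ∈ A, z a) ^ (n + 1) =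
      ∑ J ∈ A.powerset.filter (fun J => J.Nonempty),
        ((Nat.factorial J.card : ℕ) : R) * (∑ a ∈ J, z a) * (∏ a ∈ J, z a) * (∑ a ∈ A, z a) ^ (n - J.card) :=
  power_sum_subset_expansion_general A z n hn
end
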